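/- Let ρ and σ be two well agreeing near weights on R. For every n ∈ ℕ, n is a gap of H̄_x if and only if y_H(n) is a gap of H̄_y. In particular, the numerical semigroups H̄_x and H̄_y have equal genus. -/

import Mathlib

structure NearWeight (F R : Type*) [Field F] [CommRing R] [Algebra F R] where
  w : R → WithBot ℕ
  N0 : ∀ f : R, w f = ⊥ ↔ f = 0
  N1 : ∀ (c : F) (f : R), c ≠ 0 → w (c • f) = w f
  N2 : ∀ f g : R, w (f + g) ≤ max (w f) (w g)
  N3 : ∀ f g h : R, w f < w g → w (f * h) ≤ w (g * h)
  N3' : ∀ f g h : R, w f < w g → w 1 < w h → w (f * h) < w (g * h)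
  N4 : ∀ f g : R, w 1 < w f → w 1 < w g → w f = w g →
      ∃ c : F, c ≠ 0 ∧ w (f - c • g) < w f
  N5 : ∀ f g : R, w (f * g) ≤ w f + w g
  N5' : ∀ f g : R, w 1 < w f → w 1 < w g → w (f * g) = w f + w g
  norm0 : ∀ f : R, f ≠ 0 → w f ≤ w 1 → w f = 0
  normgcd : ∀ d : ℕ, (∀ f : R, w 1 < w f → ∃ k : ℕ, w f = ((d * k : ℕ) : WithBot ℕ)) → d = 1

namespace NearWeight

variable {F R : Type*} [Field F] [CommRing R] [Algebra F R]

def U (ρ : NearWeight F R) : Set R := {r | ρ.w r ≤ ρ.w 1}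

def M (ρ : NearWeight F R) : Set R := {r | ρ.w 1 < ρ.w r}

def nval (ρ : NearWeight F R) (f : R) : ℕ := (ρ.w f).unbotD 0

def Hset (ρ σ : NearWeight F R) (S : Set R) : Set (ℕ × ℕ) :=
  {p | ∃ f ∈ S, f ≠ 0 ∧ (ρ.nval f, σ.nval f) = p}

def WellAgreeing (ρ σ : NearWeight F R) : Prop :=
  (Hset ρ σ Set.univ)ᶜ.Finite ∧ ρ.U ∩ σ.U = Set.range (algebraMap F R)

noncomputable def xH (ρ σ : NearWeight F R) (n : ℕ) : ℕ :=
  sInf {m | (m, n) ∈ Hset ρ σ Set.univ}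

noncomputable def yH (ρ σ : NearWeight F R) (n : ℕ) : ℕ :=
  sInf {m | (n, m) ∈ Hset ρ σ Set.univ}

def lub (a b : ℕ × ℕ) : ℕ × ℕ := (max a.1 b.1, max a.2 b.2)

noncomputable def Gamma (ρ σ : NearWeight F R) : Set (ℕ × ℕ) :=
  {p | ∃ m : ℕ, p = (m, yH ρ σ m)} ∪ {p | ∃ n : ℕ, p = (xH ρ σ n, n)}

def Hbarx (ρ σ : NearWeight F R) : Set ℕ := {m | (m, 0) ∈ Hset ρ σ Set.univ}

def Hbary (ρ σ : NearWeight F R) : Set ℕ := {n | (0, n) ∈ Hset ρ σ Set.univ}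

noncomputable def GammaTilde (ρ σ : NearWeight F R) : Set (ℕ × ℕ) :=
  {p | ∃ m : ℕ, m ∉ Hbarx ρ σ ∧ p = (m, yH ρ σ m)}

def Delta (p : ℕ × ℕ) : Set (ℕ × ℕ) :=
  {q | (q.1 = p.1 ∧ q.2 < p.2) ∨ (q.2 = p.2 ∧ q.1 < p.1)}

noncomputable def tw (ρ : NearWeight F R) (f : R) : ℤ :=
  sInf {z : ℤ | ∃ g ∈ ρ.M, z = (ρ.nval (f * g) : ℤ) - (ρ.nval g : ℤ)}

end NearWeight

variable {F R : Type*} [Field F] [CommRing R] [Algebra F R]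

/-!
The point `(n, y_H(n))` is the lowest point of `H` in column `n`. If `n` is a gap of `H̄_x`, then
`y_H(n) > 0`, and no point of `H` strictly to the left of it can share its height: two elements
of equal `σ`-weight but different `ρ`-weights can be combined by (N4) into an element of the same
`ρ`-weight and smaller `σ`-weight, contradicting minimality. Hence `x_H(y_H(n)) = n`, which forces
`y_H(n) ∉ H̄_y` since otherwise `x_H(y_H(n)) = 0`. Exchanging the roles of `ρ` and `σ`, the maps
`y_H` and `x_H` are mutually inverse bijections between the gaps of `H̄_x` and those of `H̄_y`.
-/

namespace NearWeight

section Weight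

variable (ρ : NearWeight F R)

lemma w_eq_coe_nval {f : R} (hf : f ≠ 0) : ρ.w f = ρ.nval f := by
  cases h : ρ.w f with
  | bot => exact absurd ((ρ.N0 f).mp h) hf
  | coe k => rw [nval, h]; rfl

lemma w_one [Nontrivial R] : ρ.w 1 = 0 :=
  ρ.norm0 1 one_ne_zero le_rfl

lemma w_neg (f : R) : ρ.w (-f) = ρ.w f := by
  rw [← neg_one_smul F f]
  exact ρ.N1 (-1) f (neg_ne_zero.mpr one_ne_zero)

lemma w_add_of_lt {f g : R} (h : ρ.w g < ρ.w f) : ρ.w (f + g) = ρ.w f := by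
  refine le_antisymm ((ρ.N2 f g).trans (max_eq_left h.le).le) ?_
  have hf : ρ.w f ≤ max (ρ.w (f + g)) (ρ.w g) := by
    simpa [w_neg] using ρ.N2 (f + g) (-g)
  exact (le_max_iff.mp hf).resolve_right h.not_ge

end Weight

variable {ρ σ : NearWeight F R} {S : Set R}

lemma Hset_swap : Hset σ ρ S = Prod.swap ⁻¹' Hset ρ σ S := by
  ext ⟨a, b⟩
  simp only [Hset, Set.mem_ofPred_eq, Set.mem_preimage, Prod.swap_prod_mk, Prod.mk.injEq, and_comm]

lemma xH_swap : xH σ ρ = yH ρ σ := by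
  funext n
  unfold xH yH
  rw [Hset_swap]
  rfl

lemma yH_swap : yH σ ρ = xH ρ σ :=
  xH_swap.symm

lemma Hbarx_swap : Hbarx σ ρ = Hbary ρ σ := by
  unfold Hbarx Hbary
  rw [Hset_swap]
  rfl

lemma Hbary_swap : Hbary σ ρ = Hbarx ρ σ :=
  Hbarx_swap.symm

lemma finite_compl_Hset_swap (hH : (Hset ρ σ Set.univ)ᶜ.Finite) :
    (Hset σ ρ Set.univ)ᶜ.Finite := by
  rw [Hset_swap, ← Set.preimage_compl]
  exact hH.preimage Prod.swap_injective.injOn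

lemma nontrivial_of_mem_Hset {p : ℕ × ℕ} (hp : p ∈ Hset ρ σ S) : Nontrivial R := by
  obtain ⟨f, -, hf, -⟩ := hp
  exact nontrivial_of_ne f 0 hf

lemma zero_mem_Hbarx [Nontrivial R] : 0 ∈ Hbarx ρ σ :=
  ⟨1, trivial, one_ne_zero, by simp [nval, w_one]⟩

lemma yH_le {n m : ℕ} (h : (n, m) ∈ Hset ρ σ Set.univ) : yH ρ σ n ≤ m :=
  Nat.sInf_le h

lemma xH_le {n m : ℕ} (h : (n, m) ∈ Hset ρ σ Set.univ) : xH ρ σ m ≤ n :=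
  Nat.sInf_le h

lemma yH_mem (hH : (Hset ρ σ Set.univ)ᶜ.Finite) (n : ℕ) :
    (n, yH ρ σ n) ∈ Hset ρ σ Set.univ := by
  obtain ⟨m, hm⟩ := (hH.preimage (Prod.mk_right_injective n).injOn).exists_notMem
  exact Nat.sInf_mem (s := {m | (n, m) ∈ Hset ρ σ Set.univ}) ⟨m, not_not.mp hm⟩

lemma xH_mem (hH : (Hset ρ σ Set.univ)ᶜ.Finite) (m : ℕ) :
    (xH ρ σ m, m) ∈ Hset ρ σ Set.univ := by
  obtain ⟨n, hn⟩ := (hH.preimage (Prod.mk_left_injective m).injOn).exists_notMem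
  exact Nat.sInf_mem (s := {n | (n, m) ∈ Hset ρ σ Set.univ}) ⟨n, not_not.mp hn⟩

lemma exists_lt_of_mem_Hset {a a' b : ℕ} (hab : (a, b) ∈ Hset ρ σ Set.univ)
    (ha'b : (a', b) ∈ Hset ρ σ Set.univ) (ha : a' < a) (hb : 0 < b) :
    ∃ b' < b, (a, b') ∈ Hset ρ σ Set.univ := by
  obtain ⟨f, -, hf, hfab⟩ := hab
  obtain ⟨g, -, hg, hga'b⟩ := ha'b
  simp only [Prod.mk.injEq] at hfab hga'b
  have := nontrivial_of_ne f 0 hf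
  have hσ : σ.w f = σ.w g := by rw [w_eq_coe_nval σ hf, w_eq_coe_nval σ hg, hfab.2, hga'b.2]
  have hσf : σ.w 1 < σ.w f := by rw [w_one, w_eq_coe_nval σ hf, hfab.2]; exact_mod_cast hb
  have hρ : ρ.w g < ρ.w f := by
    rw [w_eq_coe_nval ρ hf, w_eq_coe_nval ρ hg, hfab.1, hga'b.1]; exact_mod_cast ha
  obtain ⟨c, hc, hlt⟩ := σ.N4 f g hσf (hσ ▸ hσf) hσ
  have hρh : ρ.w (f - c • g) = ρ.w f := by
    rw [sub_eq_add_neg, ← neg_smul]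
    exact ρ.w_add_of_lt (by rwa [ρ.N1 _ _ (neg_ne_zero.mpr hc)])
  have hh : f - c • g ≠ 0 := by
    intro h0
    rw [h0, (ρ.N0 0).mpr rfl, eq_comm, ρ.N0] at hρh
    exact hf hρh
  refine ⟨σ.nval (f - c • g), ?_, f - c • g, trivial, hh, ?_⟩
  · rw [w_eq_coe_nval σ hh, w_eq_coe_nval σ hf, hfab.2] at hlt
    exact_mod_cast hlt
  · rw [w_eq_coe_nval ρ hh, w_eq_coe_nval ρ hf, hfab.1] at hρh
    exact Prod.ext (by exact_mod_cast hρh) rfl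

lemma xH_yH_of_notMem_Hbarx (hH : (Hset ρ σ Set.univ)ᶜ.Finite) {n : ℕ}
    (hn : n ∉ Hbarx ρ σ) : xH ρ σ (yH ρ σ n) = n := by
  have hy := yH_mem hH n
  have hy0 : 0 < yH ρ σ n := Nat.pos_of_ne_zero fun h => hn (by rwa [h] at hy)
  refine (xH_le hy).antisymm (not_lt.mp fun hlt => ?_)
  obtain ⟨b, hb, hnb⟩ := exists_lt_of_mem_Hset hy (xH_mem hH _) hlt hy0
  exact (yH_le hnb).not_gt hb

lemma yH_notMem_Hbary (hH : (Hset ρ σ Set.univ)ᶜ.Finite) {n : ℕ}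
    (hn : n ∉ Hbarx ρ σ) : yH ρ σ n ∉ Hbary ρ σ := by
  intro hy
  have := nontrivial_of_mem_Hset hy
  have hn0 : n = 0 := by
    rw [← xH_yH_of_notMem_Hbarx hH hn]
    exact Nat.le_zero.mp (xH_le hy)
  exact hn (hn0 ▸ zero_mem_Hbarx)

lemma yH_mem_Hbary_of_mem_Hbarx {n : ℕ} (hn : n ∈ Hbarx ρ σ) : yH ρ σ n ∈ Hbary ρ σ := by
  have := nontrivial_of_mem_Hset hn
  rw [Nat.le_zero.mp (yH_le hn), ← Hbarx_swap]
  exact zero_mem_Hbarx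

lemma bijOn_yH (hH : (Hset ρ σ Set.univ)ᶜ.Finite) :
    Set.BijOn (yH ρ σ) (Hbarx ρ σ)ᶜ (Hbary ρ σ)ᶜ := by
  have hH' := finite_compl_Hset_swap hH
  have hswap : ∀ {m : ℕ}, m ∉ Hbary ρ σ → m ∉ Hbarx σ ρ := by
    intro m hm
    rwa [Hbarx_swap]
  refine Set.InvOn.bijOn ⟨fun n hn => xH_yH_of_notMem_Hbarx hH hn, fun m hm => ?_⟩
    (fun n hn => yH_notMem_Hbary hH hn) (fun m hm => ?_)
  · have := xH_yH_of_notMem_Hbarx hH' (hswap hm)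
    rwa [xH_swap (σ := σ), yH_swap (σ := σ)] at this
  · have := yH_notMem_Hbary hH' (hswap hm)
    rwa [yH_swap, Hbary_swap] at this

end NearWeight

theorem stmt4_general
    (ρ σ : NearWeight F R) (hwa : NearWeight.WellAgreeing ρ σ) :
    (∀ n : ℕ, n ∉ NearWeight.Hbarx ρ σ ↔ NearWeight.yH ρ σ n ∉ NearWeight.Hbary ρ σ) ∧
    (NearWeight.Hbarx ρ σ)ᶜ.ncard = (NearWeight.Hbary ρ σ)ᶜ.ncard := by
  exact ⟨fun n => ⟨NearWeight.yH_notMem_Hbary hwa.1, mt NearWeight.yH_mem_Hbary_of_mem_Hbarx⟩,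
    (NearWeight.bijOn_yH hwa.1).ncard_eq⟩

theorem stmt4
    (hinj : Function.Injective (algebraMap F R))
    (hsur : ¬ Function.Surjective (algebraMap F R))
    (ρ σ : NearWeight F R) (hwa : NearWeight.WellAgreeing ρ σ) :
    (∀ n : ℕ, n ∉ NearWeight.Hbarx ρ σ ↔ NearWeight.yH ρ σ n ∉ NearWeight.Hbary ρ σ) ∧
    (NearWeight.Hbarx ρ σ)ᶜ.ncard = (NearWeight.Hbary ρ σ)ᶜ.ncard :=
  stmt4_general ρ σ hwa
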